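/- Let G be a graph, H a graph with root vertex v ∈ V(H). If there exists a γ_I(G∘_v H)-function f such that B_f = {x ∈ V(G) : ω(f_x) = γ_I(H) − 1} is nonempty, then γ_I(G∘_v H) ≤ n(G)·(γ_I(H) − 1) + γ_I(G). -/

import Mathlib

open Finset

open scoped Classical

/-- An Italian dominating function on a finite simple graph: values in {0,1,2} and
every vertex with value 0 has neighbour values summing to at least 2. -/
noncomputable def IsIDF {α : Type*} [Fintype α] (G : SimpleGraph α) (f : α → ℕ) : Prop :=
  (∀ u, f u ≤ 2) ∧
    ∀ u, f u = 0 → 2 ≤ ∑ w ∈ Finset.univ.filter (fun w => G.Adj u w), f w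

/-- The Italian domination number γ_I(G). -/
noncomputable def italianNumber {α : Type*} [Fintype α] (G : SimpleGraph α) : ℕ :=
  sInf {n | ∃ f : α → ℕ, IsIDF G f ∧ ∑ u, f u = n}

/-- A γ_I(G)-function: an IDF on G of minimum weight. -/
noncomputable def IsMinIDF {α : Type*} [Fintype α] (G : SimpleGraph α) (f : α → ℕ) : Prop :=
  IsIDF G f ∧ ∑ u, f u = italianNumber G

/-- D is a dominating set of G. -/
def IsDomSet {α : Type*} (G : SimpleGraph α) (D : Set α) : Prop :=
  ∀ u ∉ D, ∃ w ∈ D, G.Adj u w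

/-- The domination number γ(G). -/
noncomputable def dominationNumber {α : Type*} [Fintype α] (G : SimpleGraph α) : ℕ :=
  sInf {n | ∃ D : Finset α, IsDomSet G ↑D ∧ D.card = n}

/-- The degree of a vertex. -/
noncomputable def deg {α : Type*} [Fintype α] (G : SimpleGraph α) (u : α) : ℕ :=
  (Finset.univ.filter (fun w => G.Adj u w)).card

/-- The rooted product G∘_v H: one copy of H for each vertex of G, the root v of the
x-th copy being identified with the vertex x of G. The pair (x, y) is the vertex y of
the x-th copy of H; in particular (x, v) is the vertex x of G. -/
def rootedProd {α β : Type*} (G : SimpleGraph α) (H : SimpleGraph β) (v : β) :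
    SimpleGraph (α × β) where
  Adj p q := (p.1 = q.1 ∧ H.Adj p.2 q.2) ∨ (p.2 = v ∧ q.2 = v ∧ G.Adj p.1 q.1)
  symm := by
    constructor
    rintro ⟨x, y⟩ ⟨x', y'⟩ (⟨h1, h2⟩ | ⟨h1, h2, h3⟩)
    · exact Or.inl ⟨h1.symm, h2.symm⟩
    · exact Or.inr ⟨h2, h1, h3.symm⟩
  loopless := by
    constructor
    rintro ⟨x, y⟩ (⟨_, h⟩ | ⟨_, _, h⟩)
    · exact H.loopless.irrefl _ h
    · exact G.loopless.irrefl _ h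

/-- The weight ω(f_x) of the restriction of f to the copy H_x. -/
def copyWeight {α β : Type*} [Fintype β] (f : α × β → ℕ) (x : α) : ℕ :=
  ∑ y, f (x, y)

/-- The graph H − {v} obtained from H by deleting the vertex v. -/
def deleteVertex {β : Type*} (H : SimpleGraph β) (v : β) : SimpleGraph {w : β // w ≠ v} :=
  SimpleGraph.induce {w : β | w ≠ v} H

/-!
If `ω(f_x) < γ_I(H)`, the restriction `f_x` is not an IDF on `H`. A non-root vertex of `H_x`
has all its neighbours inside `H_x`, so the defect of `f_x` can only be at the root: `f(x, v) = 0`.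
Copying `f_x` into every copy of `H` and putting a `γ_I(G)`-function on the roots then gives an
IDF on `G ∘_v H` of weight `n(G) · ω(f_x) + γ_I(G)`.
-/

section Italian

variable {α : Type*} [Fintype α] (G : SimpleGraph α)

lemma isIDF_const_two : IsIDF G (fun _ => 2) :=
  ⟨fun _ => le_rfl, fun _ h => absurd h two_ne_zero⟩

lemma italianNumber_le {f : α → ℕ} (hf : IsIDF G f) : italianNumber G ≤ ∑ u, f u :=
  Nat.sInf_le ⟨f, hf, rfl⟩

lemma exists_isMinIDF : ∃ f, IsMinIDF G f :=
  Nat.sInf_mem (⟨_, fun _ => 2, isIDF_const_two G, rfl⟩ :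
    {n | ∃ f : α → ℕ, IsIDF G f ∧ ∑ u, f u = n}.Nonempty)

variable {G}

lemma IsIDF.sum_pos [Nonempty α] {f : α → ℕ} (hf : IsIDF G f) : 0 < ∑ u, f u := by
  obtain ⟨u⟩ := ‹Nonempty α›
  by_contra! h0
  have hzero : ∀ w, f w = 0 := by simpa using h0
  simpa [hzero] using hf.2 u (hzero u)

variable (G)

lemma one_le_italianNumber [Nonempty α] : 1 ≤ italianNumber G := by
  obtain ⟨f, hf, hweight⟩ := exists_isMinIDF G
  exact hweight ▸ hf.sum_pos

end Italian

section RootedProduct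

variable {α β : Type*} {G : SimpleGraph α} {H : SimpleGraph β} {v : β}

noncomputable def replicateCopy (v : β) (f : α × β → ℕ) (x : α) (g : α → ℕ) : α × β → ℕ :=
  fun p => if p.2 = v then g p.1 else f (x, p.2)

lemma le_replicateCopy {f : α × β → ℕ} {x : α} (hroot : f (x, v) = 0) (g : α → ℕ)
    (a : α) (b : β) : f (x, b) ≤ replicateCopy v f x g (a, b) := by
  unfold replicateCopy
  split_ifs with hb
  · exact (hb ▸ hroot).trans_le (Nat.zero_le _)
  · exact le_rfl

variable [Fintype α] [Fintype β]

lemma sum_rootedProd_neighbors_of_ne_root (f : α × β → ℕ) (x : α) {y : β} (hy : y ≠ v) :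
    ∑ w ∈ univ.filter (fun w => (rootedProd G H v).Adj (x, y) w), f w =
      ∑ b ∈ univ.filter (fun b => H.Adj y b), f (x, b) := by
  rw [sum_filter, sum_filter, Fintype.sum_prod_type, sum_eq_single x]
  · simp [rootedProd, hy]
  · intro a _ hax
    simp [rootedProd, hy, Ne.symm hax]
  · simp

lemma sum_neighbors_root_le_sum_rootedProd_neighbors (f : α × β → ℕ) (x : α) :
    ∑ a ∈ univ.filter (fun a => G.Adj x a), f (a, v) ≤
      ∑ w ∈ univ.filter (fun w => (rootedProd G H v).Adj (x, v) w), f w := by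
  calc _ = ∑ w ∈ (univ.filter fun a => G.Adj x a).map (Function.Embedding.sectL α v), f w :=
        (sum_map _ _ _).symm
    _ ≤ _ := sum_le_sum_of_subset fun w hw => ?_
  obtain ⟨a, ha, rfl⟩ := mem_map.1 hw
  simpa [rootedProd] using ha

lemma IsIDF.isIDF_copy {f : α × β → ℕ} (hf : IsIDF (rootedProd G H v) f) {x : α}
    (hroot : f (x, v) ≠ 0) : IsIDF H (fun y => f (x, y)) := by
  refine ⟨fun y => hf.1 (x, y), fun y hy => ?_⟩
  have hyv : y ≠ v := by rintro rfl; exact hroot hy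
  rw [← sum_rootedProd_neighbors_of_ne_root f x hyv]
  exact hf.2 (x, y) hy

lemma IsIDF.root_eq_zero_of_copyWeight_lt {f : α × β → ℕ} (hf : IsIDF (rootedProd G H v) f)
    {x : α} (hlt : copyWeight f x < italianNumber H) : f (x, v) = 0 := by
  by_contra hroot
  exact (italianNumber_le H (hf.isIDF_copy hroot)).not_gt hlt

lemma isIDF_replicateCopy {f : α × β → ℕ} (hf : IsIDF (rootedProd G H v) f) {x : α}
    (hroot : f (x, v) = 0) {g : α → ℕ} (hg : IsIDF G g) :
    IsIDF (rootedProd G H v) (replicateCopy v f x g) := by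
  refine ⟨fun p => ?_, fun ⟨a, b⟩ hzero => ?_⟩
  · unfold replicateCopy
    split_ifs
    exacts [hg.1 p.1, hf.1 (x, p.2)]
  · by_cases hb : b = v
    · subst hb
      have hga : g a = 0 := by simpa [replicateCopy] using hzero
      calc 2 ≤ ∑ a' ∈ univ.filter (fun a' => G.Adj a a'), g a' := hg.2 a hga
        _ = ∑ a' ∈ univ.filter (fun a' => G.Adj a a'), replicateCopy b f x g (a', b) := by
          simp [replicateCopy]
        _ ≤ _ := sum_neighbors_root_le_sum_rootedProd_neighbors _ a
    · have hfx : f (x, b) = 0 := by simpa [replicateCopy, hb] using hzero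
      rw [sum_rootedProd_neighbors_of_ne_root _ a hb]
      calc 2 ≤ ∑ w ∈ univ.filter (fun w => (rootedProd G H v).Adj (x, b) w), f w := hf.2 _ hfx
        _ = ∑ b' ∈ univ.filter (fun b' => H.Adj b b'), f (x, b') :=
          sum_rootedProd_neighbors_of_ne_root f x hb
        _ ≤ _ := sum_le_sum fun b' _ => le_replicateCopy hroot g a b'

lemma sum_replicateCopy {f : α × β → ℕ} {x : α} (hroot : f (x, v) = 0) (g : α → ℕ) :
    ∑ p, replicateCopy v f x g p = Fintype.card α * copyWeight f x + ∑ a, g a := by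
  have hcopy : ∀ a, ∑ b, replicateCopy v f x g (a, b) = copyWeight f x + g a := by
    intro a
    rw [copyWeight, Fintype.sum_eq_add_sum_compl v, Fintype.sum_eq_add_sum_compl v, hroot,
      zero_add, add_comm]
    congr 1
    · exact sum_congr rfl fun b hb => if_neg (by simpa using hb)
    · exact if_pos rfl
  rw [Fintype.sum_prod_type, sum_congr rfl fun a _ => hcopy a, sum_add_distrib, sum_const,
    card_univ, smul_eq_mul]

end RootedProduct

theorem stmt4_general {α β : Type*} [Fintype α] [Fintype β]
    (G : SimpleGraph α) (H : SimpleGraph β) (v : β)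
    (hex : ∃ f : α × β → ℕ, IsMinIDF (rootedProd G H v) f ∧
      ∃ x : α, copyWeight f x = italianNumber H - 1) :
    italianNumber (rootedProd G H v) ≤
      Fintype.card α * (italianNumber H - 1) + italianNumber G := by
  obtain ⟨f, ⟨hf, -⟩, x, hx⟩ := hex
  have : Nonempty β := ⟨v⟩
  have hroot : f (x, v) = 0 :=
    hf.root_eq_zero_of_copyWeight_lt (by have := one_le_italianNumber H; omega)
  obtain ⟨g, hg, hgw⟩ := exists_isMinIDF G
  calc italianNumber (rootedProd G H v) ≤ ∑ p, replicateCopy v f x g p :=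
        italianNumber_le _ (isIDF_replicateCopy hf hroot hg)
    _ = _ := by rw [sum_replicateCopy hroot, hx, hgw]

/-- Proposition 1: if some γ_I(G∘_v H)-function f has B_f ≠ ∅, then
γ_I(G∘_v H) ≤ n(G)(γ_I(H) − 1) + γ_I(G). -/
theorem stmt4 {α β : Type*} [Fintype α] [Nonempty α] [Fintype β]
    (G : SimpleGraph α) (H : SimpleGraph β) (v : β)
    (hex : ∃ f : α × β → ℕ, IsMinIDF (rootedProd G H v) f ∧
      ∃ x : α, copyWeight f x = italianNumber H - 1) :
    italianNumber (rootedProd G H v) ≤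
      Fintype.card α * (italianNumber H - 1) + italianNumber G :=
  stmt4_general G H v hex
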